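/- Let K be a field, r ≥ 2, N = 2r, and u, v ∈ K such that 1−u, 1−v, 1−(u+v), (r+1)−u, (r+1)−v and (r+1)−(u+v) are all nonzero in K. Define on K^N ⊗ K^N the flip P = Σ_{i,j} E_{ij}⊗E_{ji}, the operator Q = Σ_{i,j=1}^{N} (−1)^{i+j} E_{ij}⊗E_{ī j̄} with ī = 2r+1−i, and the rational C-type R-matrix Ř(u) = (1/(1−u))(Id − u·P − (u/((r+1)−u))·Q). Then the braid form of the rational quantum Yang–Baxter equation holds: (Ř(u)⊗I)(I⊗Ř(u+v))(Ř(v)⊗I) = (I⊗Ř(v))(Ř(u+v)⊗I)(I⊗Ř(u)) as endomorphisms of K^N ⊗ K^N ⊗ K^N. -/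

import Mathlib

open Matrix Kronecker

variable {K : Type*} [Field K]

/-- The flip operator `P` on `K^N ⊗ K^N`. -/
noncomputable def Pflip (N : ℕ) : Matrix (Fin N × Fin N) (Fin N × Fin N) K :=
  ∑ i : Fin N, ∑ j : Fin N, Matrix.single i j (1 : K) ⊗ₖ Matrix.single j i (1 : K)

/-- The bar involution `ī = 2r+1-i` on `Fin (2r)` (0-based version). -/
def barC (r : ℕ) (i : Fin (2 * r)) : Fin (2 * r) := ⟨2 * r - 1 - (i : ℕ), by omega⟩

/-- The rational type-C operator `Q = Σ (−1)^{i+j} E_{ij}⊗E_{ī j̄}`. -/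
noncomputable def QratC (r : ℕ) :
    Matrix (Fin (2 * r) × Fin (2 * r)) (Fin (2 * r) × Fin (2 * r)) K :=
  ∑ i : Fin (2 * r), ∑ j : Fin (2 * r),
    ((-1 : K) ^ ((i : ℕ) + (j : ℕ))) •
      (Matrix.single i j (1 : K) ⊗ₖ Matrix.single (barC r i) (barC r j) (1 : K))

/-- The rational C-type R-matrix. -/
noncomputable def RratC (r : ℕ) (u : K) :
    Matrix (Fin (2 * r) × Fin (2 * r)) (Fin (2 * r) × Fin (2 * r)) K :=
  (1 / (1 - u)) •
    ((1 : Matrix (Fin (2 * r) × Fin (2 * r)) (Fin (2 * r) × Fin (2 * r)) K)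
      - u • Pflip (2 * r)
      - (u / (((r : K) + 1) - u)) • QratC r)

/-- `R ⊗ I` : lift to the first two factors of the triple tensor product. -/
def lift12 {N : ℕ} (R : Matrix (Fin N × Fin N) (Fin N × Fin N) K) :
    Matrix (Fin N × Fin N × Fin N) (Fin N × Fin N × Fin N) K :=
  Matrix.of fun p q => R (p.1, p.2.1) (q.1, q.2.1) * (if p.2.2 = q.2.2 then 1 else 0)

/-- `I ⊗ R` : lift to the last two factors of the triple tensor product. -/
def lift23 {N : ℕ} (R : Matrix (Fin N × Fin N) (Fin N × Fin N) K) :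
    Matrix (Fin N × Fin N × Fin N) (Fin N × Fin N × Fin N) K :=
  Matrix.of fun p q => (if p.1 = q.1 then 1 else 0) * R p.2 q.2

section Aux
variable {K : Type*} [Field K]

@[simp] lemma barC_barC {r : ℕ} (i : Fin (2*r)) : barC r (barC r i) = i := by
  have := i.is_lt; ext; simp [barC]; omega

lemma barC_eq_iff {r : ℕ} (i j : Fin (2*r)) : barC r i = j ↔ i = barC r j := by
  constructor <;> rintro rfl <;> simp

lemma Pflip_apply {N : ℕ} (p q : Fin N × Fin N) :
    (Pflip N : Matrix _ _ K) p q = if p.1 = q.2 ∧ p.2 = q.1 then 1 else 0 := by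
  obtain ⟨a, b⟩ := p; obtain ⟨c, d⟩ := q
  simp [Pflip, Matrix.sum_apply, Matrix.kroneckerMap_apply, Matrix.single,
    ite_and, mul_ite, ite_mul, Finset.sum_ite_eq, Finset.sum_ite_eq']
  aesop

lemma QratC_apply {r : ℕ} (p q : Fin (2*r) × Fin (2*r)) :
    (QratC r : Matrix _ _ K) p q =
      if p.2 = barC r p.1 ∧ q.2 = barC r q.1 then (-1 : K) ^ ((p.1 : ℕ) + (q.1 : ℕ)) else 0 := by
  obtain ⟨a, b⟩ := p; obtain ⟨c, d⟩ := q
  simp [QratC, Matrix.sum_apply, Matrix.kroneckerMap_apply, Matrix.single,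
    ite_and, mul_ite, ite_mul, barC_eq_iff, Finset.sum_ite_eq, Finset.sum_ite_eq']
  aesop

end Aux

section Aux2
variable {K : Type*} [Field K]

lemma lift12_apply {N : ℕ} (R : Matrix (Fin N × Fin N) (Fin N × Fin N) K) (p q) :
    lift12 R p q = R (p.1, p.2.1) (q.1, q.2.1) * (if p.2.2 = q.2.2 then 1 else 0) := rfl

lemma lift23_apply {N : ℕ} (R : Matrix (Fin N × Fin N) (Fin N × Fin N) K) (p q) :
    lift23 R p q = (if p.1 = q.1 then 1 else 0) * R p.2 q.2 := rfl

lemma lift12_mul {N : ℕ} (A B : Matrix (Fin N × Fin N) (Fin N × Fin N) K) :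
    lift12 (A * B) = lift12 A * lift12 B := by
  ext ⟨a, b, c⟩ ⟨d, e, f⟩
  simp [lift12, Matrix.mul_apply, Fintype.sum_prod_type, mul_ite, ite_mul,
    Finset.sum_ite_eq, Finset.sum_ite_eq', Finset.mul_sum, Finset.sum_mul]

lemma lift23_mul {N : ℕ} (A B : Matrix (Fin N × Fin N) (Fin N × Fin N) K) :
    lift23 (A * B) = lift23 A * lift23 B := by
  ext ⟨a, b, c⟩ ⟨d, e, f⟩
  simp [lift23, Matrix.mul_apply, Fintype.sum_prod_type, mul_ite, ite_mul,
    Finset.sum_ite_eq, Finset.sum_ite_eq', Finset.mul_sum, Finset.sum_mul]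

lemma lift12_one {N : ℕ} : lift12 (1 : Matrix (Fin N × Fin N) (Fin N × Fin N) K) = 1 := by
  ext ⟨a, b, c⟩ ⟨d, e, f⟩
  simp [lift12, Matrix.one_apply, Prod.ext_iff, ite_and, mul_ite, ite_mul]
  aesop

lemma lift23_one {N : ℕ} : lift23 (1 : Matrix (Fin N × Fin N) (Fin N × Fin N) K) = 1 := by
  ext ⟨a, b, c⟩ ⟨d, e, f⟩
  simp [lift23, Matrix.one_apply, Prod.ext_iff, ite_and, mul_ite, ite_mul]
  aesop

lemma lift12_smul {N : ℕ} (x : K) (A : Matrix (Fin N × Fin N) (Fin N × Fin N) K) :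
    lift12 (x • A) = x • lift12 A := by
  ext p q; simp [lift12, mul_assoc]

lemma lift23_smul {N : ℕ} (x : K) (A : Matrix (Fin N × Fin N) (Fin N × Fin N) K) :
    lift23 (x • A) = x • lift23 A := by
  ext p q; simp [lift23]

lemma lift12_sub {N : ℕ} (A B : Matrix (Fin N × Fin N) (Fin N × Fin N) K) :
    lift12 (A - B) = lift12 A - lift12 B := by
  ext p q; simp only [lift12, Matrix.sub_apply, Matrix.of_apply, sub_mul]

lemma lift23_sub {N : ℕ} (A B : Matrix (Fin N × Fin N) (Fin N × Fin N) K) :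
    lift23 (A - B) = lift23 A - lift23 B := by
  ext p q; simp only [lift23, Matrix.sub_apply, Matrix.of_apply, mul_sub]

end Aux2

section Aux3
variable {K : Type*} [Field K] {r : ℕ}

lemma neg_one_pow_cancel (a x d : ℕ) :
    ((-1 : K) ^ (a + x)) * ((-1 : K) ^ (x + d)) = (-1 : K) ^ (a + d) := by
  rw [← pow_add]
  have h : a + x + (x + d) = (a + d) + 2 * x := by ring
  rw [h, pow_add, pow_mul]
  norm_num

lemma bar_add_self (x : Fin (2*r)) : ((x : ℕ)) + ((barC r x : ℕ)) = 2*r - 1 := by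
  have := x.is_lt; simp [barC]; omega

lemma neg_one_pow_bar (x : Fin (2*r)) : ((-1 : K) ^ ((x : ℕ) + (barC r x : ℕ))) = -1 := by
  rw [bar_add_self]
  have hx := x.is_lt
  exact Odd.neg_one_pow ⟨r - 1, by omega⟩

lemma P1e (a b c d e f : Fin N) :
    (lift12 (Pflip N) : Matrix _ _ K) (a,b,c) (d,e,f)
      = if a = e ∧ b = d ∧ c = f then 1 else 0 := by
  simp only [lift12_apply, Pflip_apply]; aesop

lemma P2e (a b c d e f : Fin N) :
    (lift23 (Pflip N) : Matrix _ _ K) (a,b,c) (d,e,f)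
      = if a = d ∧ b = f ∧ c = e then 1 else 0 := by
  simp only [lift23_apply, Pflip_apply]; aesop

lemma Q1e (a b c d e f : Fin (2*r)) :
    (lift12 (QratC r) : Matrix _ _ K) (a,b,c) (d,e,f)
      = if b = barC r a ∧ e = barC r d ∧ c = f then (-1 : K) ^ ((a:ℕ) + (d:ℕ)) else 0 := by
  simp only [lift12_apply, QratC_apply]; aesop

lemma Q2e (a b c d e f : Fin (2*r)) :
    (lift23 (QratC r) : Matrix _ _ K) (a,b,c) (d,e,f)
      = if a = d ∧ c = barC r b ∧ f = barC r e then (-1 : K) ^ ((b:ℕ) + (e:ℕ)) else 0 := by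
  simp only [lift23_apply, QratC_apply]; aesop

end Aux3

section Aux4
variable {K : Type*} [Field K] {r : ℕ}

lemma neg_one_pow_barC (x : Fin (2*r)) : ((-1:K) ^ ((barC r x : ℕ))) = -((-1:K) ^ ((x:ℕ))) := by
  have h := bar_add_self (r := r) x
  have hx := x.is_lt
  rcases Nat.even_or_odd (x:ℕ) with hp|hp
  · have hq : Odd ((barC r x : ℕ)) := by
      rw [Nat.odd_iff]; rw [Nat.even_iff] at hp; omega
    rw [hp.neg_one_pow, hq.neg_one_pow]
  · have hq : Even ((barC r x : ℕ)) := by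
      rw [Nat.even_iff]; rw [Nat.odd_iff] at hp; omega
    rw [hp.neg_one_pow, hq.neg_one_pow]; ring

@[simp] lemma neg_one_pow_mul_two' (n : ℕ) : ((-1:K) ^ (n * 2)) = 1 := by
  rw [pow_mul', neg_one_sq, one_pow]

@[simp] lemma neg_one_pow_two_mul' (n : ℕ) : ((-1:K) ^ (2 * n)) = 1 := by
  rw [pow_mul, neg_one_sq, one_pow]

set_option maxRecDepth 4000

lemma P1P2e (a b c d e f : Fin N) :
    (lift12 (Pflip N) * lift23 (Pflip N) : Matrix _ _ K) (a,b,c) (d,e,f)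
      = if d = b ∧ e = c ∧ f = a then 1 else 0 := by
  rw [Matrix.mul_apply, Finset.sum_eq_single ((b, a, c) : Fin N × Fin N × Fin N)]
  · simp only [P1e, P2e]; aesop
  · rintro ⟨x, y, z⟩ - hne
    simp only [P1e, P2e]
    split_ifs <;> simp_all
  · simp

lemma P2P1e (a b c d e f : Fin N) :
    (lift23 (Pflip N) * lift12 (Pflip N) : Matrix _ _ K) (a,b,c) (d,e,f)
      = if d = c ∧ e = a ∧ f = b then 1 else 0 := by
  rw [Matrix.mul_apply, Finset.sum_eq_single ((a, c, b) : Fin N × Fin N × Fin N)]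
  · simp only [P1e, P2e]; aesop
  · rintro ⟨x, y, z⟩ - hne
    simp only [P1e, P2e]
    split_ifs <;> simp_all
  · simp

lemma P2Q1e (a b c d e f : Fin (2*r)) :
    (lift23 (Pflip (2*r)) * lift12 (QratC r) : Matrix _ _ K) (a,b,c) (d,e,f)
      = if c = barC r a ∧ e = barC r d ∧ f = b then (-1:K) ^ ((a:ℕ)+(d:ℕ)) else 0 := by
  rw [Matrix.mul_apply, Finset.sum_eq_single ((a, c, b) : Fin (2*r) × Fin (2*r) × Fin (2*r))]
  · simp only [P2e, Q1e]; aesop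
  · rintro ⟨x, y, z⟩ - hne
    simp only [P2e, Q1e]
    split_ifs <;> simp_all
  · simp

lemma Q1P2e (a b c d e f : Fin (2*r)) :
    (lift12 (QratC r) * lift23 (Pflip (2*r)) : Matrix _ _ K) (a,b,c) (d,e,f)
      = if b = barC r a ∧ f = barC r d ∧ e = c then (-1:K) ^ ((a:ℕ)+(d:ℕ)) else 0 := by
  rw [Matrix.mul_apply,
    Finset.sum_eq_single ((d, barC r d, c) : Fin (2*r) × Fin (2*r) × Fin (2*r))]
  · simp only [P2e, Q1e]; aesop
  · rintro ⟨x, y, z⟩ - hne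
    simp only [P2e, Q1e]
    split_ifs <;> simp_all
  · simp

lemma P1Q2e (a b c d e f : Fin (2*r)) :
    (lift12 (Pflip (2*r)) * lift23 (QratC r) : Matrix _ _ K) (a,b,c) (d,e,f)
      = if d = b ∧ c = barC r a ∧ f = barC r e then (-1:K) ^ ((a:ℕ)+(e:ℕ)) else 0 := by
  rw [Matrix.mul_apply, Finset.sum_eq_single ((b, a, c) : Fin (2*r) × Fin (2*r) × Fin (2*r))]
  · simp only [P1e, Q2e]; aesop
  · rintro ⟨x, y, z⟩ - hne
    simp only [P1e, Q2e]
    split_ifs <;> simp_all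
  · simp

lemma Q2P1e (a b c d e f : Fin (2*r)) :
    (lift23 (QratC r) * lift12 (Pflip (2*r)) : Matrix _ _ K) (a,b,c) (d,e,f)
      = if c = barC r b ∧ e = a ∧ f = barC r d then (-1:K) ^ ((b:ℕ)+(d:ℕ)) else 0 := by
  rw [Matrix.mul_apply,
    Finset.sum_eq_single ((a, d, barC r d) : Fin (2*r) × Fin (2*r) × Fin (2*r))]
  · simp only [P1e, Q2e]; aesop
  · rintro ⟨x, y, z⟩ - hne
    simp only [P1e, Q2e]
    split_ifs <;> simp_all
  · simp

lemma Q1Q2e (a b c d e f : Fin (2*r)) :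
    (lift12 (QratC r) * lift23 (QratC r) : Matrix _ _ K) (a,b,c) (d,e,f)
      = if b = barC r a ∧ d = c ∧ f = barC r e then -((-1:K) ^ ((a:ℕ)+(e:ℕ))) else 0 := by
  rw [Matrix.mul_apply,
    Finset.sum_eq_single ((d, barC r d, c) : Fin (2*r) × Fin (2*r) × Fin (2*r))]
  · simp only [Q1e, Q2e]
    split_ifs <;> simp_all [pow_add, neg_one_pow_barC] <;> ring_nf <;> simp_all
  · rintro ⟨x, y, z⟩ - hne
    simp only [Q1e, Q2e]
    split_ifs <;> simp_all
  · simp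

lemma Q2Q1e (a b c d e f : Fin (2*r)) :
    (lift23 (QratC r) * lift12 (QratC r) : Matrix _ _ K) (a,b,c) (d,e,f)
      = if c = barC r b ∧ e = barC r d ∧ f = a then -((-1:K) ^ ((b:ℕ)+(d:ℕ))) else 0 := by
  rw [Matrix.mul_apply,
    Finset.sum_eq_single ((a, barC r a, a) : Fin (2*r) × Fin (2*r) × Fin (2*r))]
  · simp only [Q1e, Q2e, barC_barC, eq_self_iff_true, true_and, and_true]
    split_ifs <;> simp_all [pow_add, neg_one_pow_barC] <;> ring_nf <;> simp_all
  · rintro ⟨x, y, z⟩ - hne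
    simp only [Q1e, Q2e]
    split_ifs with h1 h2
    · exfalso; apply hne
      obtain ⟨h1a, h1b, h1c⟩ := h1
      obtain ⟨h2a, h2b, h2c⟩ := h2
      subst h1a h2a h2c
      rw [barC_barC] at h1c
      subst h1c; rfl
    all_goals ring
  · simp

end Aux4

section Aux5
variable {K : Type*} [Field K] {r : ℕ}

set_option maxRecDepth 4000
set_option linter.unnecessarySeqFocus false

lemma w_P1P1 : (lift12 (Pflip N) * lift12 (Pflip N) : Matrix _ _ K) = 1 := by
  ext ⟨a,b,c⟩ ⟨d,e,f⟩
  rw [Matrix.mul_apply, Finset.sum_eq_single ((b, a, c) : Fin N × Fin N × Fin N)]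
  · simp only [P1e, Matrix.one_apply, Prod.ext_iff]; split_ifs <;> simp_all
  · rintro ⟨x, y, z⟩ - hne
    simp only [P1e]; split_ifs <;> simp_all
  · simp

lemma w_P2P2 : (lift23 (Pflip N) * lift23 (Pflip N) : Matrix _ _ K) = 1 := by
  ext ⟨a,b,c⟩ ⟨d,e,f⟩
  rw [Matrix.mul_apply, Finset.sum_eq_single ((a, c, b) : Fin N × Fin N × Fin N)]
  · simp only [P2e, Matrix.one_apply, Prod.ext_iff]; split_ifs <;> simp_all
  · rintro ⟨x, y, z⟩ - hne
    simp only [P2e]; split_ifs <;> simp_all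
  · simp

lemma w_P1Q1 : (lift12 (Pflip (2*r)) * lift12 (QratC r) : Matrix _ _ K) = -(lift12 (QratC r)) := by
  ext ⟨a,b,c⟩ ⟨d,e,f⟩
  simp only [Matrix.neg_apply, Q1e]
  rw [Matrix.mul_apply, Finset.sum_eq_single ((b, a, c) : Fin (2*r) × Fin (2*r) × Fin (2*r))]
  · simp only [P1e, Q1e]
    split_ifs <;> simp_all [pow_add, neg_one_pow_barC] <;> ring_nf <;> simp_all
  · rintro ⟨x, y, z⟩ - hne
    simp only [P1e, Q1e]; split_ifs <;> simp_all
  · simp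

lemma w_Q1P1 : (lift12 (QratC r) * lift12 (Pflip (2*r)) : Matrix _ _ K) = -(lift12 (QratC r)) := by
  ext ⟨a,b,c⟩ ⟨d,e,f⟩
  simp only [Matrix.neg_apply, Q1e]
  rw [Matrix.mul_apply,
    Finset.sum_eq_single ((e, barC r e, c) : Fin (2*r) × Fin (2*r) × Fin (2*r))]
  · simp only [P1e, Q1e]
    split_ifs <;> simp_all [barC_eq_iff, pow_add, neg_one_pow_barC] <;> ring_nf <;> simp_all
  · rintro ⟨x, y, z⟩ - hne
    simp only [P1e, Q1e]; split_ifs <;> simp_all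
  · simp

lemma w_P2Q2 : (lift23 (Pflip (2*r)) * lift23 (QratC r) : Matrix _ _ K) = -(lift23 (QratC r)) := by
  ext ⟨a,b,c⟩ ⟨d,e,f⟩
  simp only [Matrix.neg_apply, Q2e]
  rw [Matrix.mul_apply, Finset.sum_eq_single ((a, c, b) : Fin (2*r) × Fin (2*r) × Fin (2*r))]
  · simp only [P2e, Q2e]
    split_ifs <;> simp_all [pow_add, neg_one_pow_barC] <;> ring_nf <;> simp_all
  · rintro ⟨x, y, z⟩ - hne
    simp only [P2e, Q2e]; split_ifs <;> simp_all
  · simp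

lemma w_Q2P2 : (lift23 (QratC r) * lift23 (Pflip (2*r)) : Matrix _ _ K) = -(lift23 (QratC r)) := by
  ext ⟨a,b,c⟩ ⟨d,e,f⟩
  simp only [Matrix.neg_apply, Q2e]
  rw [Matrix.mul_apply,
    Finset.sum_eq_single ((a, f, barC r f) : Fin (2*r) × Fin (2*r) × Fin (2*r))]
  · simp only [P2e, Q2e]
    split_ifs <;> simp_all [barC_eq_iff, pow_add, neg_one_pow_barC] <;> ring_nf <;> simp_all
  · rintro ⟨x, y, z⟩ - hne
    simp only [P2e, Q2e]; split_ifs <;> simp_all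
  · simp

lemma w_Q1Q1 : (lift12 (QratC r) * lift12 (QratC r) : Matrix _ _ K)
    = (2 * (r : K)) • lift12 (QratC r) := by
  ext ⟨a,b,c⟩ ⟨d,e,f⟩
  rw [Matrix.mul_apply, Fintype.sum_prod_type]
  have h1 : ∀ x : Fin (2*r),
      (∑ yz : Fin (2*r) × Fin (2*r),
        (lift12 (QratC r) : Matrix _ _ K) (a,b,c) (x, yz.1, yz.2)
          * lift12 (QratC r) (x, yz.1, yz.2) (d,e,f))
      = if b = barC r a ∧ e = barC r d ∧ c = f then (-1:K) ^ ((a:ℕ)+(d:ℕ)) else 0 := by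
    intro x
    rw [Finset.sum_eq_single ((barC r x, c) : Fin (2*r) × Fin (2*r))]
    · simp only [Q1e]
      split_ifs <;> simp_all [pow_add, neg_one_pow_barC] <;> ring_nf <;> simp_all
    · rintro ⟨y, z⟩ - hne
      simp only [Q1e]; split_ifs <;> simp_all
    · simp
  simp_rw [h1]
  rw [Finset.sum_const, Finset.card_univ, Fintype.card_fin]
  simp only [Matrix.smul_apply, Q1e, smul_eq_mul, nsmul_eq_mul]
  push_cast
  split_ifs <;> ring

lemma Q_mul_Q : (QratC r * QratC r : Matrix _ _ K) = (2 * (r : K)) • QratC r := by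
  ext ⟨a,b⟩ ⟨c,d⟩
  rw [Matrix.mul_apply, Fintype.sum_prod_type]
  have h1 : ∀ x : Fin (2*r),
      (∑ y : Fin (2*r), (QratC r : Matrix _ _ K) (a,b) (x, y) * QratC r (x, y) (c,d))
      = if b = barC r a ∧ d = barC r c then (-1:K) ^ ((a:ℕ)+(c:ℕ)) else 0 := by
    intro x
    rw [Finset.sum_eq_single (barC r x)]
    · simp only [QratC_apply]
      split_ifs <;> simp_all [pow_add, neg_one_pow_barC] <;> ring_nf <;> simp_all
    · rintro y - hne
      simp only [QratC_apply]; split_ifs <;> simp_all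
    · simp
  simp_rw [h1]
  rw [Finset.sum_const, Finset.card_univ, Fintype.card_fin]
  simp only [Matrix.smul_apply, QratC_apply, smul_eq_mul, nsmul_eq_mul]
  push_cast
  split_ifs <;> ring

lemma w_Q2Q2 : (lift23 (QratC r) * lift23 (QratC r) : Matrix _ _ K)
    = (2 * (r : K)) • lift23 (QratC r) := by
  rw [← lift23_mul, Q_mul_Q, lift23_smul]

end Aux5

section Aux6
variable {K : Type*} [Field K] {r : ℕ}

set_option maxRecDepth 8000
set_option linter.unnecessarySeqFocus false
set_option linter.unreachableTactic false
set_option linter.unusedTactic false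

lemma B3L_e (a b c d e f : Fin (2*r)) :
    (lift12 (Pflip (2*r)) * (lift23 (Pflip (2*r)) * lift12 (Pflip (2*r))) : Matrix _ _ K) (a,b,c) (d,e,f)
      = if d = c ∧ e = b ∧ f = a then 1 else 0 := by
  rw [Matrix.mul_apply, Finset.sum_eq_single ((b, a, c) : Fin (2*r) × Fin (2*r) × Fin (2*r))]
  · simp only [P1e, P2P1e]; split_ifs <;> simp_all
  · rintro ⟨x, y, z⟩ - hne
    simp only [P1e, P2P1e]; split_ifs <;> simp_all
  · simp

lemma B3R_e (a b c d e f : Fin (2*r)) :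
    (lift23 (Pflip (2*r)) * (lift12 (Pflip (2*r)) * lift23 (Pflip (2*r))) : Matrix _ _ K) (a,b,c) (d,e,f)
      = if d = c ∧ e = b ∧ f = a then 1 else 0 := by
  rw [Matrix.mul_apply, Finset.sum_eq_single ((a, c, b) : Fin (2*r) × Fin (2*r) × Fin (2*r))]
  · simp only [P2e, P1P2e]; split_ifs <;> simp_all
  · rintro ⟨x, y, z⟩ - hne
    simp only [P2e, P1P2e]; split_ifs <;> simp_all
  · simp

lemma w_braid : (lift23 (Pflip (2*r)) * (lift12 (Pflip (2*r)) * lift23 (Pflip (2*r))) : Matrix _ _ K) = lift12 (Pflip (2*r)) * (lift23 (Pflip (2*r)) * lift12 (Pflip (2*r))) := by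
  ext ⟨a,b,c⟩ ⟨d,e,f⟩
  rw [B3L_e, B3R_e]

lemma XL_e (a b c d e f : Fin (2*r)) :
    (lift12 (Pflip (2*r)) * (lift23 (QratC r) * lift12 (Pflip (2*r))) : Matrix _ _ K) (a,b,c) (d,e,f)
      = if c = barC r a ∧ e = b ∧ f = barC r d then (-1:K) ^ ((a:ℕ)+(d:ℕ)) else 0 := by
  rw [Matrix.mul_apply, Finset.sum_eq_single ((b, a, c) : Fin (2*r) × Fin (2*r) × Fin (2*r))]
  · simp only [P1e, Q2P1e]
    split_ifs <;> simp_all [barC_eq_iff, pow_add, neg_one_pow_barC] <;> ring_nf <;> simp_all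
  · rintro ⟨x, y, z⟩ - hne
    simp only [P1e, Q2P1e]; split_ifs <;> simp_all [barC_eq_iff]
  · simp

lemma XR_e (a b c d e f : Fin (2*r)) :
    (lift23 (Pflip (2*r)) * (lift12 (QratC r) * lift23 (Pflip (2*r))) : Matrix _ _ K) (a,b,c) (d,e,f)
      = if c = barC r a ∧ e = b ∧ f = barC r d then (-1:K) ^ ((a:ℕ)+(d:ℕ)) else 0 := by
  rw [Matrix.mul_apply, Finset.sum_eq_single ((a, c, b) : Fin (2*r) × Fin (2*r) × Fin (2*r))]
  · simp only [P2e, Q1P2e]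
    split_ifs <;> simp_all [barC_eq_iff, pow_add, neg_one_pow_barC] <;> ring_nf <;> simp_all
  · rintro ⟨x, y, z⟩ - hne
    simp only [P2e, Q1P2e]; split_ifs <;> simp_all [barC_eq_iff]
  · simp

lemma w_X : (lift12 (Pflip (2*r)) * (lift23 (QratC r) * lift12 (Pflip (2*r))) : Matrix _ _ K) = lift23 (Pflip (2*r)) * (lift12 (QratC r) * lift23 (Pflip (2*r))) := by
  ext ⟨a,b,c⟩ ⟨d,e,f⟩
  rw [XL_e, XR_e]

lemma w_L2 : (lift12 (Pflip (2*r)) * (lift23 (Pflip (2*r)) * lift12 (QratC r)) : Matrix _ _ K) = -(lift23 (QratC r) * lift12 (QratC r)) := by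
  ext ⟨a,b,c⟩ ⟨d,e,f⟩
  simp only [Matrix.neg_apply, Q2Q1e]
  rw [Matrix.mul_apply, Finset.sum_eq_single ((b, a, c) : Fin (2*r) × Fin (2*r) × Fin (2*r))]
  · simp only [P1e, P2Q1e, barC_barC, eq_self_iff_true, true_and, and_true]
    split_ifs <;> simp_all [barC_eq_iff, pow_add, neg_one_pow_barC] <;> ring_nf <;> simp_all
  · rintro ⟨x, y, z⟩ - hne
    simp only [P1e, P2Q1e]
    split_ifs <;> simp_all [barC_eq_iff]
  · simp

lemma w_L4 : (lift12 (Pflip (2*r)) * (lift23 (QratC r) * lift12 (QratC r)) : Matrix _ _ K) = -(lift23 (Pflip (2*r)) * lift12 (QratC r)) := by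
  ext ⟨a,b,c⟩ ⟨d,e,f⟩
  simp only [Matrix.neg_apply, P2Q1e]
  rw [Matrix.mul_apply, Finset.sum_eq_single ((b, a, c) : Fin (2*r) × Fin (2*r) × Fin (2*r))]
  · simp only [P1e, Q2Q1e, barC_barC, eq_self_iff_true, true_and, and_true]
    split_ifs <;> simp_all [barC_eq_iff, pow_add, neg_one_pow_barC] <;> ring_nf <;> simp_all
  · rintro ⟨x, y, z⟩ - hne
    simp only [P1e, Q2Q1e]
    split_ifs <;> simp_all [barC_eq_iff]
  · simp

lemma w_L5 : (lift12 (QratC r) * (lift23 (Pflip (2*r)) * lift12 (Pflip (2*r))) : Matrix _ _ K) = -(lift12 (QratC r) * lift23 (QratC r)) := by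
  ext ⟨a,b,c⟩ ⟨d,e,f⟩
  simp only [Matrix.neg_apply, Q1Q2e]
  rw [Matrix.mul_apply, Finset.sum_eq_single ((e, barC r e, c) : Fin (2*r) × Fin (2*r) × Fin (2*r))]
  · simp only [Q1e, P2P1e, barC_barC, eq_self_iff_true, true_and, and_true]
    split_ifs <;> simp_all [barC_eq_iff, pow_add, neg_one_pow_barC] <;> ring_nf <;> simp_all
  · rintro ⟨x, y, z⟩ - hne
    simp only [Q1e, P2P1e]
    split_ifs <;> simp_all [barC_eq_iff]
  · simp

lemma w_L6 : (lift12 (QratC r) * (lift23 (Pflip (2*r)) * lift12 (QratC r)) : Matrix _ _ K) = lift12 (QratC r) := by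
  ext ⟨a,b,c⟩ ⟨d,e,f⟩
  simp only [Matrix.neg_apply, Q1e]
  rw [Matrix.mul_apply, Finset.sum_eq_single ((barC r c, c, c) : Fin (2*r) × Fin (2*r) × Fin (2*r))]
  · simp only [Q1e, P2Q1e, barC_barC, eq_self_iff_true, true_and, and_true]
    split_ifs <;> simp_all [barC_eq_iff, pow_add, neg_one_pow_barC] <;> ring_nf <;> simp_all
  · rintro ⟨x, y, z⟩ - hne
    simp only [Q1e, P2Q1e]
    split_ifs <;> simp_all [barC_eq_iff]
  · simp

lemma w_L7 : (lift12 (QratC r) * (lift23 (QratC r) * lift12 (Pflip (2*r))) : Matrix _ _ K) = -(lift12 (QratC r) * lift23 (Pflip (2*r))) := by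
  ext ⟨a,b,c⟩ ⟨d,e,f⟩
  simp only [Matrix.neg_apply, Q1P2e]
  rw [Matrix.mul_apply, Finset.sum_eq_single ((c, barC r c, c) : Fin (2*r) × Fin (2*r) × Fin (2*r))]
  · simp only [Q1e, Q2P1e, barC_barC, eq_self_iff_true, true_and, and_true]
    split_ifs <;> simp_all [barC_eq_iff, pow_add, neg_one_pow_barC] <;> ring_nf <;> simp_all
  · rintro ⟨x, y, z⟩ - hne
    simp only [Q1e, Q2P1e]
    split_ifs <;> simp_all [barC_eq_iff]
  · simp

lemma w_L8 : (lift12 (QratC r) * (lift23 (QratC r) * lift12 (QratC r)) : Matrix _ _ K) = lift12 (QratC r) := by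
  ext ⟨a,b,c⟩ ⟨d,e,f⟩
  simp only [Matrix.neg_apply, Q1e]
  rw [Matrix.mul_apply, Finset.sum_eq_single ((c, barC r c, c) : Fin (2*r) × Fin (2*r) × Fin (2*r))]
  · simp only [Q1e, Q2Q1e, barC_barC, eq_self_iff_true, true_and, and_true]
    split_ifs <;> simp_all [barC_eq_iff, pow_add, neg_one_pow_barC] <;> ring_nf <;> simp_all
  · rintro ⟨x, y, z⟩ - hne
    simp only [Q1e, Q2Q1e]
    split_ifs <;> simp_all [barC_eq_iff]
  · simp

lemma w_R2 : (lift23 (Pflip (2*r)) * (lift12 (Pflip (2*r)) * lift23 (QratC r)) : Matrix _ _ K) = -(lift12 (QratC r) * lift23 (QratC r)) := by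
  ext ⟨a,b,c⟩ ⟨d,e,f⟩
  simp only [Matrix.neg_apply, Q1Q2e]
  rw [Matrix.mul_apply, Finset.sum_eq_single ((a, c, b) : Fin (2*r) × Fin (2*r) × Fin (2*r))]
  · simp only [P2e, P1Q2e, barC_barC, eq_self_iff_true, true_and, and_true]
    split_ifs <;> simp_all [barC_eq_iff, pow_add, neg_one_pow_barC] <;> ring_nf <;> simp_all
  · rintro ⟨x, y, z⟩ - hne
    simp only [P2e, P1Q2e]
    split_ifs <;> simp_all [barC_eq_iff]
  · simp

lemma w_R4 : (lift23 (Pflip (2*r)) * (lift12 (QratC r) * lift23 (QratC r)) : Matrix _ _ K) = -(lift12 (Pflip (2*r)) * lift23 (QratC r)) := by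
  ext ⟨a,b,c⟩ ⟨d,e,f⟩
  simp only [Matrix.neg_apply, P1Q2e]
  rw [Matrix.mul_apply, Finset.sum_eq_single ((a, c, b) : Fin (2*r) × Fin (2*r) × Fin (2*r))]
  · simp only [P2e, Q1Q2e, barC_barC, eq_self_iff_true, true_and, and_true]
    split_ifs <;> simp_all [barC_eq_iff, pow_add, neg_one_pow_barC] <;> ring_nf <;> simp_all
  · rintro ⟨x, y, z⟩ - hne
    simp only [P2e, Q1Q2e]
    split_ifs <;> simp_all [barC_eq_iff]
  · simp

lemma w_R5 : (lift23 (QratC r) * (lift12 (Pflip (2*r)) * lift23 (Pflip (2*r))) : Matrix _ _ K) = -(lift23 (QratC r) * lift12 (QratC r)) := by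
  ext ⟨a,b,c⟩ ⟨d,e,f⟩
  simp only [Matrix.neg_apply, Q2Q1e]
  rw [Matrix.mul_apply, Finset.sum_eq_single ((a, d, barC r d) : Fin (2*r) × Fin (2*r) × Fin (2*r))]
  · simp only [Q2e, P1P2e, barC_barC, eq_self_iff_true, true_and, and_true]
    split_ifs <;> simp_all [barC_eq_iff, pow_add, neg_one_pow_barC] <;> ring_nf <;> simp_all
  · rintro ⟨x, y, z⟩ - hne
    simp only [Q2e, P1P2e]
    split_ifs <;> simp_all [barC_eq_iff]
  · simp

lemma w_R6 : (lift23 (QratC r) * (lift12 (Pflip (2*r)) * lift23 (QratC r)) : Matrix _ _ K) = lift23 (QratC r) := by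
  ext ⟨a,b,c⟩ ⟨d,e,f⟩
  simp only [Matrix.neg_apply, Q2e]
  rw [Matrix.mul_apply, Finset.sum_eq_single ((a, d, barC r d) : Fin (2*r) × Fin (2*r) × Fin (2*r))]
  · simp only [Q2e, P1Q2e, barC_barC, eq_self_iff_true, true_and, and_true]
    split_ifs <;> simp_all [barC_eq_iff, pow_add, neg_one_pow_barC] <;> ring_nf <;> simp_all
  · rintro ⟨x, y, z⟩ - hne
    simp only [Q2e, P1Q2e]
    split_ifs <;> simp_all [barC_eq_iff]
  · simp

lemma w_R7 : (lift23 (QratC r) * (lift12 (QratC r) * lift23 (Pflip (2*r))) : Matrix _ _ K) = -(lift23 (QratC r) * lift12 (Pflip (2*r))) := by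
  ext ⟨a,b,c⟩ ⟨d,e,f⟩
  simp only [Matrix.neg_apply, Q2P1e]
  rw [Matrix.mul_apply, Finset.sum_eq_single ((a, barC r a, a) : Fin (2*r) × Fin (2*r) × Fin (2*r))]
  · simp only [Q2e, Q1P2e, barC_barC, eq_self_iff_true, true_and, and_true]
    split_ifs <;> simp_all [barC_eq_iff, pow_add, neg_one_pow_barC] <;> ring_nf <;> simp_all
  · rintro ⟨x, y, z⟩ - hne
    simp only [Q2e, Q1P2e]
    split_ifs <;> simp_all [barC_eq_iff]
  · simp

lemma w_R8 : (lift23 (QratC r) * (lift12 (QratC r) * lift23 (QratC r)) : Matrix _ _ K) = lift23 (QratC r) := by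
  ext ⟨a,b,c⟩ ⟨d,e,f⟩
  simp only [Matrix.neg_apply, Q2e]
  rw [Matrix.mul_apply, Finset.sum_eq_single ((a, barC r a, a) : Fin (2*r) × Fin (2*r) × Fin (2*r))]
  · simp only [Q2e, Q1Q2e, barC_barC, eq_self_iff_true, true_and, and_true]
    split_ifs <;> simp_all [barC_eq_iff, pow_add, neg_one_pow_barC] <;> ring_nf <;> simp_all
  · rintro ⟨x, y, z⟩ - hne
    simp only [Q2e, Q1Q2e]
    split_ifs <;> simp_all [barC_eq_iff]
  · simp

end Aux6

set_option maxHeartbeats 1000000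

/-- The rational C-type R-matrix satisfies the braid form of the rational quantum
Yang-Baxter equation. -/
theorem rational_Ctype_YBE (r : ℕ) (hr : 2 ≤ r) (u v : K)
    (hu : 1 - u ≠ 0) (hv : 1 - v ≠ 0) (huv : 1 - (u + v) ≠ 0)
    (hu' : ((r : K) + 1) - u ≠ 0) (hv' : ((r : K) + 1) - v ≠ 0)
    (huv' : ((r : K) + 1) - (u + v) ≠ 0) :
    lift12 (RratC r u) * lift23 (RratC r (u + v)) * lift12 (RratC r v)
      = lift23 (RratC r v) * lift12 (RratC r (u + v)) * lift23 (RratC r u) := by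
  have e12 : ∀ x : K, (1 - x) ≠ 0 → (((r:K)+1) - x) ≠ 0 →
      ((1-x) * (((r:K)+1) - x)) • lift12 (RratC r x)
      = ((((r:K)+1) - x) • (1 : Matrix (Fin (2*r) × Fin (2*r) × Fin (2*r)) _ K)
          - (x * (((r:K)+1) - x)) • lift12 (Pflip (2*r)) - x • lift12 (QratC r)) := by
    intro x hx hx'
    rw [RratC, lift12_smul, lift12_sub, lift12_sub, lift12_one, lift12_smul, lift12_smul]
    match_scalars <;> field_simp <;> ring
  have e23 : ∀ x : K, (1 - x) ≠ 0 → (((r:K)+1) - x) ≠ 0 →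
      ((1-x) * (((r:K)+1) - x)) • lift23 (RratC r x)
      = ((((r:K)+1) - x) • (1 : Matrix (Fin (2*r) × Fin (2*r) × Fin (2*r)) _ K)
          - (x * (((r:K)+1) - x)) • lift23 (Pflip (2*r)) - x • lift23 (QratC r)) := by
    intro x hx hx'
    rw [RratC, lift23_smul, lift23_sub, lift23_sub, lift23_one, lift23_smul, lift23_smul]
    match_scalars <;> field_simp <;> ring
  set su : K := (1-u) * (((r:K)+1) - u) with hsu
  set sv : K := (1-v) * (((r:K)+1) - v) with hsv
  set sw : K := (1-(u+v)) * (((r:K)+1) - (u+v)) with hsw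
  have hsu0 : su ≠ 0 := mul_ne_zero hu hu'
  have hsv0 : sv ≠ 0 := mul_ne_zero hv hv'
  have hsw0 : sw ≠ 0 := mul_ne_zero huv huv'
  have key : (su • lift12 (RratC r u)) * (sw • lift23 (RratC r (u+v))) * (sv • lift12 (RratC r v))
      = (sv • lift23 (RratC r v)) * (sw • lift12 (RratC r (u+v))) * (su • lift23 (RratC r u)) := by
    rw [e12 u hu hu', e12 v hv hv', e23 (u+v) huv huv', e23 v hv hv', e23 u hu hu',
      e12 (u+v) huv huv']
    simp only [sub_mul, mul_sub, smul_mul_assoc, mul_smul_comm, smul_sub, smul_smul,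
      one_mul, mul_one, mul_assoc]
    simp only [w_P1P1, w_P2P2, w_P1Q1, w_Q1P1, w_P2Q2, w_Q2P2, w_Q1Q1, w_Q2Q2,
      w_braid, w_X, w_L2, w_L4, w_L5, w_L6, w_L7, w_L8, w_R2, w_R4, w_R5, w_R6, w_R7, w_R8]
    match_scalars <;> ring
  simp only [smul_mul_assoc, mul_smul_comm, smul_smul] at key
  rw [show su * (sw * sv) = sv * (sw * su) by ring] at key
  exact smul_right_injective _ (by exact mul_ne_zero hsv0 (mul_ne_zero hsw0 hsu0)) key
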